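/- Let f be L-additive with h_f nonzero-valued. Then the Dirichlet convolution (τ * Λ_f)(n) = f(n)τ(n)/(2 h_f(n)). -/

import Mathlib

open Finset

def IsCompletelyMultiplicative (h : ℕ → ℂ) : Prop :=
  h 1 = 1 ∧ ∀ m n : ℕ, 0 < m → 0 < n → h (m * n) = h m * h n

def IsLAdditive (f h : ℕ → ℂ) : Prop :=
  IsCompletelyMultiplicative h ∧
    ∀ m n : ℕ, 0 < m → 0 < n → f (m * n) = f m * h n + f n * h m

def IsCompletelyAdditive (g : ℕ → ℂ) : Prop :=
  ∀ m n : ℕ, 0 < m → 0 < n → g (m * n) = g m + g n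

/-- Generalized von Mangoldt function associated to an L-additive `f` with component `h`. -/
noncomputable def genVonMangoldt (f h : ℕ → ℂ) (n : ℕ) : ℂ :=
  if IsPrimePow n then f n.minFac / h n.minFac else 0

lemma aux_f_one (f h : ℕ → ℂ) (hL : IsLAdditive f h) : f 1 = 0 := by
  have := hL.2 1 1 one_pos one_pos
  rw [hL.1.1] at this
  simp only [mul_one] at this
  linear_combination -this

lemma aux_g_add (f h : ℕ → ℂ) (hL : IsLAdditive f h) (hne : ∀ n : ℕ, 0 < n → h n ≠ 0)
    (m k : ℕ) (hm : 0 < m) (hk : 0 < k) :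
    f (m * k) / h (m * k) = f m / h m + f k / h k := by
  rw [hL.2 m k hm hk, hL.1.2 m k hm hk]
  field_simp [hne m hm, hne k hk]

/-- Key lemma: the divisor sum of the generalized von Mangoldt function is `f n / h n`. -/
lemma aux_sum_gvm (f h : ℕ → ℂ) (hL : IsLAdditive f h) (hne : ∀ n : ℕ, 0 < n → h n ≠ 0) :
    ∀ n : ℕ, 0 < n → ∑ i ∈ n.divisors, genVonMangoldt f h i = f n / h n := by
  refine Nat.recOnPrimeCoprime (by simp) ?_ ?_
  · -- prime power case
    intro p k hp _
    have hp' : p.Prime := hp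
    rw [Nat.sum_divisors_prime_pow hp']
    have hgvm : ∀ i : ℕ, genVonMangoldt f h (p ^ (i + 1)) = f p / h p := by
      intro i
      have hpp : IsPrimePow (p ^ (i + 1)) := hp.isPrimePow.pow (Nat.succ_ne_zero i)
      rw [genVonMangoldt, if_pos hpp, Nat.pow_minFac (Nat.succ_ne_zero i), hp'.minFac_eq]
    have hgk : ∀ k : ℕ, f (p ^ k) / h (p ^ k) = (k : ℂ) * (f p / h p) := by
      intro k
      induction k with
      | zero => simp [aux_f_one f h hL]
      | succ j ih =>
        rw [pow_succ, aux_g_add f h hL hne _ p (pow_pos hp'.pos j) hp'.pos, ih]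
        push_cast; ring
    rw [Finset.sum_range_succ', hgk]
    simp only [hgvm, Nat.pow_zero]
    rw [genVonMangoldt, if_neg not_isPrimePow_one]
    simp [Finset.sum_const, Finset.card_range]
  · -- coprime case
    intro a b ha' hb' hab ha hb
    have hapos : 0 < a := lt_trans one_pos ha'
    have hbpos : 0 < b := lt_trans one_pos hb'
    intro _
    have ha := ha hapos
    have hb := hb hbpos
    have hsupp : ∀ m : ℕ, ∑ i ∈ m.divisors, genVonMangoldt f h i
        = ∑ i ∈ m.divisors.filter IsPrimePow, genVonMangoldt f h i := by
      intro m
      rw [Finset.sum_filter]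
      refine Finset.sum_congr rfl fun i _ => ?_
      by_cases hi : IsPrimePow i <;> simp [genVonMangoldt, hi]
    rw [hsupp] at ha hb ⊢
    rw [Nat.mul_divisors_filter_prime_pow hab, Finset.filter_union,
      Finset.sum_union (Nat.disjoint_divisors_filter_isPrimePow hab), ha, hb,
      aux_g_add f h hL hne a b hapos hbpos]

theorem stmt6 (f h : ℕ → ℂ) (hL : IsLAdditive f h)
    (hne : ∀ n : ℕ, 0 < n → h n ≠ 0) (n : ℕ) (hn : 0 < n) :
    ∑ d ∈ n.divisors, (d.divisors.card : ℂ) * genVonMangoldt f h (n / d) =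
      f n * (n.divisors.card : ℂ) / (2 * h n) := by
  classical
  set L : ArithmeticFunction ℂ :=
    ⟨fun m => genVonMangoldt f h m, by simp [genVonMangoldt, not_isPrimePow_zero]⟩ with hLdef
  have hLapp : ∀ m, L m = genVonMangoldt f h m := fun m => rfl
  -- τ as (ζ * ζ)
  have hTau : ∀ d : ℕ, ((↑(ArithmeticFunction.zeta : ArithmeticFunction ℕ) : ArithmeticFunction ℂ)
      * ↑(ArithmeticFunction.zeta : ArithmeticFunction ℕ)) d = (d.divisors.card : ℂ) := by
    intro d
    rw [ArithmeticFunction.coe_zeta_mul_apply]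
    rw [Finset.card_eq_sum_ones d.divisors]
    push_cast
    refine Finset.sum_congr rfl fun i hi => ?_
    have : i ≠ 0 := (Nat.pos_of_mem_divisors hi).ne'
    simp [ArithmeticFunction.natCoe_apply, ArithmeticFunction.zeta_apply, this]
  -- LHS equals ((ζ*ζ)*L) n
  have h1 : ∑ d ∈ n.divisors, (d.divisors.card : ℂ) * genVonMangoldt f h (n / d)
      = ((↑(ArithmeticFunction.zeta : ArithmeticFunction ℕ) * ↑(ArithmeticFunction.zeta : ArithmeticFunction ℕ)) * L) n := by
    rw [ArithmeticFunction.mul_apply, Nat.sum_divisorsAntidiagonal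
      (fun a b => ((↑(ArithmeticFunction.zeta : ArithmeticFunction ℕ) * ↑(ArithmeticFunction.zeta : ArithmeticFunction ℕ)
        : ArithmeticFunction ℂ)) a * L b)]
    exact Finset.sum_congr rfl fun d _ => by rw [hTau, hLapp]
  have h2 : ((↑(ArithmeticFunction.zeta : ArithmeticFunction ℕ) * ↑(ArithmeticFunction.zeta : ArithmeticFunction ℕ)) * L) n
      = ∑ d ∈ n.divisors, f d / h d := by
    rw [mul_assoc, ArithmeticFunction.coe_zeta_mul_apply]
    refine Finset.sum_congr rfl fun d hd => ?_
    rw [ArithmeticFunction.coe_zeta_mul_apply]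
    exact aux_sum_gvm f h hL hne d (Nat.pos_of_mem_divisors hd)
  -- pairing d ↔ n/d
  have h3 : (2 : ℂ) * ∑ d ∈ n.divisors, f d / h d = (n.divisors.card : ℂ) * (f n / h n) := by
    have hpair : ∑ d ∈ n.divisors, f d / h d = ∑ d ∈ n.divisors, f (n / d) / h (n / d) :=
      (Nat.sum_div_divisors n (fun d => f d / h d)).symm
    rw [two_mul]
    nth_rewrite 2 [hpair]
    rw [← Finset.sum_add_distrib, Finset.card_eq_sum_ones, Nat.cast_sum, Finset.sum_mul]
    refine Finset.sum_congr rfl fun d hd => ?_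
    obtain ⟨hdvd, hn0⟩ := Nat.mem_divisors.mp hd
    have hdpos : 0 < d := Nat.pos_of_mem_divisors hd
    have hqpos : 0 < n / d := Nat.div_pos (Nat.le_of_dvd hn hdvd) hdpos
    have hmul : d * (n / d) = n := Nat.mul_div_cancel' hdvd
    have hadd : f n / h n = f d / h d + f (n / d) / h (n / d) := by
      conv_lhs => rw [← hmul]
      exact aux_g_add f h hL hne d (n / d) hdpos hqpos
    rw [hadd]; push_cast; ring
  rw [h1, h2]
  have hhn := hne n hn
  have : (∑ d ∈ n.divisors, f d / h d) = (n.divisors.card : ℂ) * (f n / h n) / 2 := by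
    field_simp at h3 ⊢
    linear_combination h3
  rw [this]
  field_simp
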